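/- Let C be a generalized Cartan matrix on a finite nonempty set I and let v : I → ℝ be a configuration. If two (<-1)-plays from v each end at a configuration having no coordinate strictly less than -1, then the two plays have the same length and end at the same configuration. -/

import Mathlib

/-- Firing vertex `i`: `v` is replaced by `fun j => v j - C i j * v i`. -/
def fire {I : Type*} (C : I → I → ℤ) (i : I) (v : I → ℝ) : I → ℝ :=
  fun j => v j - (C i j : ℝ) * v i

/-- The configuration resulting from firing the vertices in the list `l` successively. -/
def playResult {I : Type*} (C : I → I → ℤ) : (I → ℝ) → List I → (I → ℝ)
  | v, [] => v
  | v, i :: l => playResult C (fire C i v) l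

/-- `IsPlay C θ v l` : the list `l` is a sequence of successive firings starting at `v`
in which each fired vertex has amplitude strictly less than `θ` at the time it is fired.
With `θ = 0` this is a legal play; with `θ = -1` a `(<-1)`-play. -/
def IsPlay {I : Type*} (C : I → I → ℤ) (θ : ℝ) : (I → ℝ) → List I → Prop
  | _, [] => True
  | v, i :: l => v i < θ ∧ IsPlay C θ (fire C i v) l

/-
Eriksson's strong convergence argument. Let `i ≠ j` with `v i, v j < -1` and suppose some
`(<-1)`-play from `v` terminates. Then `C i j * C j i ≤ 3`: otherwise the weight
`-C i j * v i + 2 * v j` never increases along a play, yet starts below the value `C i j - 2`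
that it is at least at a terminal configuration. So `i` and `j` span a finite dihedral type,
and the two alternating words of the length of its longest element are plays from `v` with the
same result. Induction on the length of a terminating play then shows that every play extends
to a terminating play of that same length and with the same result.
-/

section

variable {I : Type*} (C : I → I → ℤ)

theorem playResult_append (v : I → ℝ) (p q : List I) :
    playResult C v (p ++ q) = playResult C (playResult C v p) q := by
  induction p generalizing v with
  | nil => rfl
  | cons i p ih => exact ih (fire C i v)

theorem isPlay_append {θ : ℝ} {v : I → ℝ} {p q : List I} :
    IsPlay C θ v (p ++ q) ↔ IsPlay C θ v p ∧ IsPlay C θ (playResult C v p) q := by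
  induction p generalizing v with
  | nil => simp [IsPlay, playResult]
  | cons i p ih => simp [IsPlay, playResult, ih, and_assoc]

theorem eq_nil_of_isPlay {θ : ℝ} {v : I → ℝ} (hv : ∀ j, θ ≤ v j) :
    ∀ {p : List I}, IsPlay C θ v p → p = []
  | [], _ => rfl
  | i :: _, hp => absurd (hv i) (not_le.2 hp.1)

theorem IsPlay.apply_playResult_le {θ : ℝ} (f : (I → ℝ) → ℝ)
    (hf : ∀ k v, v k < θ → f (fire C k v) ≤ f v) :
    ∀ {v : I → ℝ} {p : List I}, IsPlay C θ v p → f (playResult C v p) ≤ f v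
  | _, [], _ => le_rfl
  | v, k :: _, hp => (IsPlay.apply_playResult_le f hf hp.2).trans (hf k v hp.1)

def alternating (i j : I) : ℕ → List I
  | 0 => []
  | n + 1 => i :: alternating j i n

theorem length_alternating (i j : I) (n : ℕ) : (alternating i j n).length = n := by
  induction n generalizing i j with
  | zero => rfl
  | succ n ih => simp [alternating, ih]

def BraidPlay (v : I → ℝ) (i j : I) (m : ℕ) : Prop :=
  IsPlay C (-1) v (alternating i j m) ∧ IsPlay C (-1) v (alternating j i m) ∧
    playResult C v (alternating i j m) = playResult C v (alternating j i m)

theorem BraidPlay.symm {v : I → ℝ} {i j : I} {m : ℕ} (h : BraidPlay C v i j m) :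
    BraidPlay C v j i m :=
  ⟨h.2.1, h.1, h.2.2.symm⟩

/- Along either word every fired amplitude is `a * v i + b * v j` for a positive root
`a α_i + b α_j` of the rank-two root system, hence `< -1`; the two results agree because the
word has the length of the longest element of the dihedral Weyl group. -/
theorem exists_braidPlay_of_finiteType (hdiag : ∀ i, C i i = 2) {v : I → ℝ} {i j : I}
    (hi : v i < -1) (hj : v j < -1)
    (h : C i j = 0 ∧ C j i = 0 ∨ C i j = -1 ∧ C j i = -1 ∨ C i j = -1 ∧ C j i = -2 ∨
      C i j = -1 ∧ C j i = -3) :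
    ∃ m, BraidPlay C v i j (m + 1) := by
  rcases h with ⟨h1, h2⟩ | ⟨h1, h2⟩ | ⟨h1, h2⟩ | ⟨h1, h2⟩
  on_goal 1 => use 1
  on_goal 2 => use 2
  on_goal 3 => use 3
  on_goal 4 => use 5
  all_goals
    refine ⟨?_, ?_, funext fun k => ?_⟩ <;>
    simp only [alternating, IsPlay, playResult, fire, h1, h2, hdiag, and_true] <;>
    push_cast <;>
    first
    | ring1
    | (repeat' apply And.intro) <;> linarith

theorem weight_fire_le (hdiag : ∀ i, C i i = 2) (hoff : ∀ i j, i ≠ j → C i j ≤ 0)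
    {i j : I} (hne : i ≠ j) (hbig : 4 ≤ C i j * C j i) {v : I → ℝ} {k : I}
    (hk : v k ≤ 0) :
    -C i j * fire C k v i + 2 * fire C k v j ≤ -C i j * v i + 2 * v j := by
  have hcd : (4 : ℝ) ≤ C i j * C j i := by exact_mod_cast hbig
  by_cases hki : k = i
  · subst hki
    simp only [fire, hdiag]
    push_cast
    linarith
  by_cases hkj : k = j
  · subst hkj
    simp only [fire, hdiag]
    push_cast
    nlinarith
  have hc : (C i j : ℝ) ≤ 0 := by exact_mod_cast hoff i j hne
  have hki' : (0 : ℝ) ≤ C k i * v k :=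
    mul_nonneg_of_nonpos_of_nonpos (by exact_mod_cast hoff k i hki) hk
  have hkj' : (0 : ℝ) ≤ C k j * v k :=
    mul_nonneg_of_nonpos_of_nonpos (by exact_mod_cast hoff k j hkj) hk
  simp only [fire]
  nlinarith

theorem mul_le_three_of_isPlay (hdiag : ∀ i, C i i = 2) (hoff : ∀ i j, i ≠ j → C i j ≤ 0)
    {i j : I} (hne : i ≠ j) {v : I → ℝ} (hi : v i < -1) (hj : v j < -1) {p : List I}
    (hp : IsPlay C (-1) v p) (hend : ∀ k, -1 ≤ playResult C v p k) :
    C i j * C j i ≤ 3 := by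
  by_contra! hbig
  have hweight := IsPlay.apply_playResult_le C (fun w => -C i j * w i + 2 * w j)
    (fun k w hk => weight_fire_le C hdiag hoff hne hbig (by linarith)) hp
  have hc : (0 : ℝ) ≤ -C i j := by
    have : (C i j : ℝ) ≤ 0 := by exact_mod_cast hoff i j hne
    linarith
  have := mul_le_mul_of_nonneg_left (hend i) hc
  have := mul_le_mul_of_nonneg_left hi.le hc
  linarith [hend j]

theorem exists_braidPlay (hdiag : ∀ i, C i i = 2) (hoff : ∀ i j, i ≠ j → C i j ≤ 0)
    (hzero : ∀ i j, C i j = 0 ↔ C j i = 0) {v : I → ℝ} {i j : I} (hne : i ≠ j)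
    (hi : v i < -1) (hj : v j < -1) (hprod : C i j * C j i ≤ 3) :
    ∃ m, BraidPlay C v i j (m + 1) := by
  obtain h0 | h0 := eq_or_ne (C i j) 0
  · exact exists_braidPlay_of_finiteType C hdiag hi hj (Or.inl ⟨h0, (hzero i j).1 h0⟩)
  have hc : C i j ≤ -1 := by have := hoff i j hne; omega
  have hd : C j i ≤ -1 := by have := hoff j i hne.symm; have := (hzero i j).not.1 h0; omega
  have hc' : -3 ≤ C i j := by nlinarith
  have hd' : -3 ≤ C j i := by nlinarith
  interval_cases hcv : C i j <;> interval_cases hdv : C j i <;>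
    first
    | omega
    | (refine exists_braidPlay_of_finiteType C hdiag hi hj ?_; omega)
    | (refine (exists_braidPlay_of_finiteType C hdiag hj hi ?_).imp fun _ h => h.symm
       omega)

theorem exists_completion (hdiag : ∀ i, C i i = 2) (hoff : ∀ i j, i ≠ j → C i j ≤ 0)
    (hzero : ∀ i j, C i j = 0 ↔ C j i = 0) {v : I → ℝ} {p q : List I}
    (hp : IsPlay C (-1) v p) (hpend : ∀ k, -1 ≤ playResult C v p k) (hq : IsPlay C (-1) v q) :
    ∃ r, IsPlay C (-1) (playResult C v q) r ∧ q.length + r.length = p.length ∧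
      playResult C v (q ++ r) = playResult C v p := by
  obtain ⟨n, hn⟩ : ∃ n, p.length = n := ⟨_, rfl⟩
  induction n generalizing v p q with
  | zero =>
    obtain rfl := List.eq_nil_of_length_eq_zero hn
    obtain rfl := eq_nil_of_isPlay C hpend hq
    exact ⟨[], trivial, rfl, rfl⟩
  | succ n ih =>
    obtain _ | ⟨i, p'⟩ := p
    · simp at hn
    obtain _ | ⟨j, q'⟩ := q
    · exact ⟨i :: p', hp, by simp, rfl⟩
    have hn' : p'.length = n := by simpa using hn
    by_cases hij : i = j
    · subst hij
      obtain ⟨r, hr, hlen, hres⟩ := ih hp.2 hpend hq.2 hn'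
      exact ⟨r, hr, by simp; omega, hres⟩
    obtain ⟨m, hia, hjb, hab⟩ := exists_braidPlay C hdiag hoff hzero hij hp.1 hq.1
      (mul_le_three_of_isPlay C hdiag hoff hij hp.1 hq.1 hp hpend)
    obtain ⟨r₀, hr₀, hlen₀, hres₀⟩ := ih hp.2 hpend hia.2 hn'
    have hw : playResult C (fire C j v) (alternating i j m) =
        playResult C (fire C i v) (alternating j i m) := hab.symm
    have hjr₀ : IsPlay C (-1) (fire C j v) (alternating i j m ++ r₀) :=
      (isPlay_append C).2 ⟨hjb.2, hw ▸ hr₀⟩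
    have hjr₀end : playResult C (fire C j v) (alternating i j m ++ r₀) =
        playResult C (fire C i v) p' := by
      rw [playResult_append, hw, ← playResult_append, hres₀]
    have hjr₀len : (alternating i j m ++ r₀).length = n := by
      simp only [List.length_append, length_alternating] at hlen₀ ⊢
      omega
    obtain ⟨r, hr, hlen, hres⟩ := ih hjr₀ (hjr₀end ▸ hpend) hq.2 hjr₀len
    exact ⟨r, hr, by simp; omega, hres.trans hjr₀end⟩

end

theorem lt_neg_one_play_confluence_general
    {I : Type*} (C : I → I → ℤ)
    (hdiag : ∀ i, C i i = 2)
    (hoff : ∀ i j, i ≠ j → C i j ≤ 0)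
    (hzero : ∀ i j, C i j = 0 ↔ C j i = 0)
    (v : I → ℝ) (p q : List I)
    (hp : IsPlay C (-1) v p) (hpend : ∀ j, -1 ≤ playResult C v p j)
    (hq : IsPlay C (-1) v q) (hqend : ∀ j, -1 ≤ playResult C v q j) :
    p.length = q.length ∧ playResult C v p = playResult C v q := by
  obtain ⟨r, hr, hlen, hres⟩ := exists_completion C hdiag hoff hzero hp hpend hq
  obtain rfl := eq_nil_of_isPlay C hqend hr
  exact ⟨by simpa using hlen.symm, by simpa using hres.symm⟩

/-- If two `(<-1)`-plays from `v` each end at a configuration with no coordinate `< -1`,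
then they have the same length and end at the same configuration. -/
theorem lt_neg_one_play_confluence
    {I : Type*} [Fintype I] [Nonempty I] (C : I → I → ℤ)
    (hdiag : ∀ i, C i i = 2)
    (hoff : ∀ i j, i ≠ j → C i j ≤ 0)
    (hzero : ∀ i j, C i j = 0 ↔ C j i = 0)
    (v : I → ℝ) (p q : List I)
    (hp : IsPlay C (-1) v p) (hpend : ∀ j, -1 ≤ playResult C v p j)
    (hq : IsPlay C (-1) v q) (hqend : ∀ j, -1 ≤ playResult C v q j) :
    p.length = q.length ∧ playResult C v p = playResult C v q :=
  lt_neg_one_play_confluence_general C hdiag hoff hzero v p q hp hpend hq hqend
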